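/- Let a = diag(1,1,ω,ω,ω²,ω²) ∈ GL_6(ℂ) with ω = e^{2πi/3}, and let b be the given 6×6 matrix with entries in (1/3)ℤ[ω]. Then (abab⁻¹)² = ω·I_6, i.e. the square of the commutator-type element abab⁻¹ is the scalar matrix ω·I. -/

import Mathlib

/-!
Both b⁻¹ and abab⁻¹ are explicit matrices with entries in (1/3)ℤ[ω], so b·b⁻¹ = 1 and
(abab⁻¹)² = ω·1 become entrywise polynomial identities in ω, which hold modulo ω² + ω + 1.
-/

noncomputable def ω : ℂ := Complex.exp (2 * Real.pi * Complex.I / 3)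

noncomputable def matA : Matrix (Fin 6) (Fin 6) ℂ :=
  Matrix.diagonal ![1, 1, ω, ω, ω ^ 2, ω ^ 2]

noncomputable def matB : Matrix (Fin 6) (Fin 6) ℂ :=
  (3 : ℂ)⁻¹ • Matrix.of
    ![![-1, 0, -ω, 0, 3 * ω ^ 2, 2 * ω ^ 2],
      ![2, 0, 2 * ω, 0, 0, -ω ^ 2],
      ![-ω ^ 2, 0, 2, 3, 0, -ω],
      ![2 * ω ^ 2, 0, -1, 0, 0, 2 * ω],
      ![2 * ω, 3 * ω, -ω ^ 2, 0, 0, -1],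
      ![-ω, 0, 2 * ω ^ 2, 0, 0, 2]]

theorem isPrimitiveRoot_omega : IsPrimitiveRoot ω 3 := by
  simpa [ω] using Complex.isPrimitiveRoot_exp 3 (by norm_num)

theorem omega_sq_add_omega_add_one : ω ^ 2 + ω + 1 = 0 := by
  have h := isPrimitiveRoot_omega.geom_sum_eq_zero (by norm_num)
  rw [Finset.sum_range_succ, Finset.sum_range_succ, Finset.sum_range_one] at h
  linear_combination h

noncomputable def matBInv : Matrix (Fin 6) (Fin 6) ℂ :=
  (3 : ℂ)⁻¹ • Matrix.of
    ![![0, 2, 0, 2 * ω, 0, -ω ^ 2],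
      ![0, -1, 0, -ω, 3 * ω ^ 2, 2 * ω ^ 2],
      ![0, 2 * ω ^ 2, 0, -1, 0, 2 * ω],
      ![0, -ω ^ 2, 3, 2, 0, -ω],
      ![3 * ω, 2 * ω, 0, -ω ^ 2, 0, -1],
      ![0, -ω, 0, 2 * ω ^ 2, 0, 2]]

noncomputable def matABABInv : Matrix (Fin 6) (Fin 6) ℂ :=
  (3 : ℂ)⁻¹ • Matrix.of
    ![![3 * ω ^ 2, 2 * ω ^ 2, 0, -ω, 0, -1],
      ![0, -ω ^ 2, 0, 2 * ω, 0, 2],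
      ![0, -1, 3 * ω ^ 2, 2 * ω ^ 2, 0, -ω],
      ![0, 2, 0, -ω ^ 2, 0, 2 * ω],
      ![0, -ω, 0, -1, 3 * ω ^ 2, 2 * ω ^ 2],
      ![0, 2 * ω, 0, 2, 0, -ω ^ 2]]

theorem matB_mul_matBInv : matB * matBInv = 1 := by
  have h := omega_sq_add_omega_add_one
  ext i j
  fin_cases i <;> fin_cases j <;>
    simp [matB, matBInv, Matrix.mul_apply, Fin.sum_univ_succ] <;> grind

theorem matB_inv : matB⁻¹ = matBInv :=
  Matrix.inv_eq_right_inv matB_mul_matBInv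

theorem matA_mul_matB_mul_matA_mul_matBInv : matA * matB * matA * matBInv = matABABInv := by
  have h := omega_sq_add_omega_add_one
  ext i j
  fin_cases i <;> fin_cases j <;>
    simp [matA, matB, matBInv, matABABInv, Matrix.mul_apply, Fin.sum_univ_succ] <;> grind

theorem matABABInv_mul_self : matABABInv * matABABInv = ω • 1 := by
  have h := omega_sq_add_omega_add_one
  ext i j
  fin_cases i <;> fin_cases j <;>
    simp [matABABInv, Matrix.mul_apply, Fin.sum_univ_succ] <;> grind

theorem abab_inv_sq_eq_omega_smul_one :
    (matA * matB * matA * matB⁻¹) ^ 2 = ω • (1 : Matrix (Fin 6) (Fin 6) ℂ) := by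
  rw [matB_inv, matA_mul_matB_mul_matA_mul_matBInv, sq, matABABInv_mul_self]
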